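/- arXiv:1803.05164 — 2 statements merged into one kernel-verified Lean document; each statement's English description precedes it below -/
import Mathlib

section
/- T_{4n} = (-1)^n for all n ≥ 0, and for k ≥ 2, T_{2^{k+1}·n + 2^k - 2} = (-1)^{n+1}. -/
/-!
Row `i` of the Hankel matrix of `D m` has its ones in the columns `j` with `i + j + 2` a power of
two, and for each `b` at most one `j ≤ b` qualifies, since only one power of two lies in
`(b + 1, 2 * (b + 1)]`. Peeling off the largest index therefore shows that a single permutation
contributes to the determinant: for `2 ^ ν ≤ m < 2 ^ (ν + 1)` it reverses the block
`[2 ^ (ν + 1) - 1 - m, m)` and recurses below it. Hence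
`D m = (-1) ^ (m - 2 ^ ν) * D (2 ^ (ν + 1) - 1 - m)`, so `T` is invariant under
`m ↦ 2 ^ (ν + 1) - 3 - m`, and induction gives `T m = (-1) ^ m * f (m / 2 + 1)` for a signed
paperfolding sequence `f`, which contains both claims.
-/

open Classical in
noncomputable def A (n : ℕ) : ℤ := if ∃ k : ℕ, n + 2 = 2 ^ (k + 1) then 1 else 0

noncomputable def D (n : ℕ) : ℤ :=
  Matrix.det (Matrix.of fun i j : Fin n => A ((i : ℕ) + j))

noncomputable def T (n : ℕ) : ℤ := D n * D (n + 2)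

open Equiv Function

namespace Equiv.Perm

variable {α : Type*} [LinearOrder α] {R : α → α → Prop}

theorem eqOn_of_forall_rel (hR : ∀ x y, R x y → R y x)
    (huniq : ∀ ⦃x y b⦄, x ≤ b → y ≤ b → R x b → R y b → x = y) {σ τ : Perm α} (s : Finset α)
    (hσs : ∀ x, σ x ∈ s ↔ x ∈ s) (hτs : ∀ x, τ x ∈ s ↔ x ∈ s)
    (hσ : ∀ x ∈ s, R (σ x) x) (hτ : ∀ x ∈ s, R (τ x) x) : Set.EqOn σ τ s := by
  induction s using Finset.strongInduction with
  | H s ih =>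
  rcases s.eq_empty_or_nonempty with rfl | hne
  · simp
  set b := s.max' hne
  have hb : b ∈ s := s.max'_mem hne
  have swaps_max : ∀ ρ : Perm α, (∀ x, ρ x ∈ s ↔ x ∈ s) → (∀ x ∈ s, R (ρ x) x) → ρ (ρ b) = b := by
    intro ρ hρs hρ
    have hc : ρ⁻¹ b ∈ s := (hρs _).1 (by simpa using hb)
    have hcb : ρ⁻¹ b = ρ b := huniq (s.le_max' _ hc) (s.le_max' _ ((hρs b).2 hb))
      (hR _ _ (by simpa using hρ _ hc)) (hρ b hb)
    rw [← hcb]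
    simp
  have hστ : σ b = τ b :=
    huniq (s.le_max' _ ((hσs b).2 hb)) (s.le_max' _ ((hτs b).2 hb)) (hσ b hb) (hτ b hb)
  set a := σ b
  have hσa : σ a = b := swaps_max σ hσs hσ
  have hτa : τ a = b := by rw [hστ]; exact swaps_max τ hτs hτ
  have hsub : (s.erase b).erase a ⊂ s :=
    (Finset.erase_subset _ _).trans_ssubset (Finset.erase_ssubset hb)
  have preserves : ∀ ρ : Perm α, (∀ x, ρ x ∈ s ↔ x ∈ s) → ρ b = a → ρ a = b →
      ∀ x, ρ x ∈ (s.erase b).erase a ↔ x ∈ (s.erase b).erase a := by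
    intro ρ hρs hρb hρa x
    have e1 : ρ x ≠ a ↔ x ≠ b := by rw [← hρb, ρ.injective.ne_iff]
    have e2 : ρ x ≠ b ↔ x ≠ a := by rw [← hρa, ρ.injective.ne_iff]
    simp only [Finset.mem_erase, hρs, e1, e2]
    tauto
  have hrest := ih _ hsub (preserves σ hσs rfl hσa) (preserves τ hτs hστ.symm hτa)
    (fun x hx => hσ x (hsub.subset hx)) (fun x hx => hτ x (hsub.subset hx))
  intro x hx
  by_cases hxb : x = b
  · rw [hxb]
    exact hστ
  by_cases hxa : x = a
  · rw [hxa, hσa, hτa]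
  exact hrest (by simp [hx, hxa, hxb])

theorem eq_of_forall_rel [Fintype α] (hR : ∀ x y, R x y → R y x)
    (huniq : ∀ ⦃x y b⦄, x ≤ b → y ≤ b → R x b → R y b → x = y) {σ τ : Perm α}
    (hσ : ∀ x, R (σ x) x) (hτ : ∀ x, R (τ x) x) : σ = τ :=
  ext fun x => eqOn_of_forall_rel hR huniq Finset.univ (by simp) (by simp)
    (fun x _ => hσ x) (fun x _ => hτ x) (Finset.mem_univ x)

end Equiv.Perm

theorem Matrix.det_eq_sign_of_unique_perm {n R : Type*} [Fintype n] [DecidableEq n] [CommRing R]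
    (M : Matrix n n R) (π : Perm n) (hπ : ∀ i, M (π i) i = 1)
    (huniq : ∀ σ : Perm n, (∀ i, M (σ i) i ≠ 0) → σ = π) :
    M.det = ((Perm.sign π : ℤ) : R) := by
  rw [Matrix.det_apply, Finset.sum_eq_single π]
  · simp [hπ, Units.smul_def]
  · intro σ _ hσπ
    obtain ⟨i, hi⟩ : ∃ i, M (σ i) i = 0 := by
      by_contra! h
      exact hσπ (huniq σ h)
    rw [Finset.prod_eq_zero (f := fun j => M (σ j) j) (Finset.mem_univ i) hi, smul_zero]
  · simp

lemma A_ne_zero_iff {n : ℕ} : A n ≠ 0 ↔ ∃ k, n + 2 = 2 ^ (k + 1) := by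
  unfold A
  split_ifs with h <;> simp [h]

lemma eq_of_A_add_ne_zero {x y b : ℕ} (hx : x ≤ b) (hy : y ≤ b) (hxb : A (x + b) ≠ 0)
    (hyb : A (y + b) ≠ 0) : x = y := by
  wlog hxy : x ≤ y generalizing x y
  · exact (this hy hx hyb hxb (by omega)).symm
  obtain ⟨k, hk⟩ := A_ne_zero_iff.1 hxb
  obtain ⟨l, hl⟩ := A_ne_zero_iff.1 hyb
  -- `x + b + 2` and `y + b + 2` are powers of two in `(b + 1, 2 * (b + 1)]`
  have hkl : k = l := by
    have hle : 2 ^ (k + 1) ≤ 2 ^ (l + 1) := by omega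
    have hlt : 2 ^ (l + 1) < 2 ^ (k + 1 + 1) := by rw [pow_succ]; omega
    have := (Nat.pow_le_pow_iff_right (by norm_num)).1 hle
    have := (Nat.pow_lt_pow_iff_right (by norm_num)).1 hlt
    omega
  subst hkl
  omega

def mirror (m : ℕ) : ℕ := 2 ^ (Nat.log 2 m + 1) - 1 - m

lemma mirror_eq {m ν : ℕ} (h₁ : 2 ^ ν ≤ m) (h₂ : m < 2 ^ (ν + 1)) :
    mirror m = 2 ^ (ν + 1) - 1 - m := by
  rw [mirror, Nat.log_eq_of_pow_le_of_lt_pow h₁ h₂]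

lemma mirror_add_add_one (m : ℕ) : mirror m + m + 1 = 2 ^ (Nat.log 2 m + 1) := by
  have := Nat.lt_pow_succ_log_self Nat.one_lt_two m
  unfold mirror
  omega

lemma mirror_lt {m : ℕ} (hm : m ≠ 0) : mirror m < m := by
  have := Nat.pow_log_le_self 2 hm
  have := mirror_add_add_one m
  rw [pow_succ] at this
  omega

def reflect (a b x : ℕ) : ℕ := if a ≤ x ∧ x ≤ b then a + b - x else x

lemma reflect_involutive (a b : ℕ) : Involutive (reflect a b) := by
  intro x
  unfold reflect
  split_ifs <;> omega

/-- The involution whose restriction to `[0, m)` is the only permutation contributing to `D m`. -/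
def partner (m : ℕ) : ℕ → ℕ :=
  if hm : m = 0 then id else reflect (mirror m) (m - 1) ∘ partner (mirror m)
termination_by m
decreasing_by exact mirror_lt hm

lemma partner_zero : partner 0 = id := by
  rw [partner, dif_pos rfl]

lemma partner_of_ne_zero {m : ℕ} (hm : m ≠ 0) :
    partner m = reflect (mirror m) (m - 1) ∘ partner (mirror m) := by
  rw [partner, dif_neg hm]

lemma partner_of_le {m x : ℕ} (h : m ≤ x) : partner m x = x := by
  induction m using Nat.strong_induction_on with
  | _ m ih =>
  rcases eq_or_ne m 0 with rfl | hm
  · rw [partner_zero, id]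
  · rw [partner_of_ne_zero hm, comp_apply, ih _ (mirror_lt hm) ((mirror_lt hm).le.trans h),
      reflect, if_neg (by omega)]

lemma partner_lt {m x : ℕ} (h : x < m) : partner m x < m := by
  induction m using Nat.strong_induction_on generalizing x with
  | _ m ih =>
  have hm : m ≠ 0 := by omega
  have ha := mirror_lt hm
  rw [partner_of_ne_zero hm, comp_apply, reflect]
  rcases lt_or_ge x (mirror m) with hx | hx
  · have := ih _ ha hx
    rw [if_neg (by omega)]
    omega
  · rw [partner_of_le hx]
    split_ifs <;> omega

lemma partner_involutive (m : ℕ) : Involutive (partner m) := by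
  induction m using Nat.strong_induction_on with
  | _ m ih =>
  rcases eq_or_ne m 0 with rfl | hm
  · simp [partner_zero, Involutive]
  intro x
  rw [partner_of_ne_zero hm]
  simp only [comp_apply]
  rcases lt_or_ge x (mirror m) with hx | hx
  · have hlt := partner_lt hx
    have fix : ∀ y < mirror m, reflect (mirror m) (m - 1) y = y := fun y hy => by
      rw [reflect, if_neg (by omega)]
    rw [fix _ hlt, ih _ (mirror_lt hm), fix _ hx]
  · have hge : mirror m ≤ reflect (mirror m) (m - 1) x := by
      unfold reflect
      split_ifs <;> omega
    rw [partner_of_le hx, partner_of_le hge, reflect_involutive]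

lemma exists_add_partner {m x : ℕ} (h : x < m) : ∃ k, x + partner m x + 2 = 2 ^ (k + 1) := by
  induction m using Nat.strong_induction_on generalizing x with
  | _ m ih =>
  have hm : m ≠ 0 := by omega
  rw [partner_of_ne_zero hm, comp_apply]
  rcases lt_or_ge x (mirror m) with hx | hx
  · have := partner_lt hx
    rw [reflect, if_neg (by omega)]
    exact ih _ (mirror_lt hm) hx
  · refine ⟨Nat.log 2 m, ?_⟩
    have := mirror_add_add_one m
    rw [partner_of_le hx, reflect, if_pos (by omega)]
    omega

def Fin.permOfInvolutive {n : ℕ} (f : ℕ → ℕ) (hf : Involutive f) (hn : ∀ x < n, f x < n) :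
    Perm (Fin n) :=
  Involutive.toPerm (fun i : Fin n => ⟨f i, hn i i.2⟩) fun i => Fin.ext (hf i)

@[simp]
lemma Fin.val_permOfInvolutive {n : ℕ} (f : ℕ → ℕ) (hf : Involutive f) (hn : ∀ x < n, f x < n)
    (i : Fin n) : (Fin.permOfInvolutive f hf hn i : ℕ) = f i :=
  rfl

def reflectPerm (n a b : ℕ) (hb : b < n) : Perm (Fin n) :=
  Fin.permOfInvolutive (reflect a b) (reflect_involutive a b) fun x hx => by
    unfold reflect
    split_ifs <;> omega

lemma sign_reflectPerm {n a b : ℕ} (hb : b < n) :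
    Perm.sign (reflectPerm n a b hb) = (-1) ^ ((b + 1 - a) / 2) := by
  induction b using Nat.strong_induction_on generalizing a with
  | _ b ih =>
  rcases lt_or_ge a b with hab | hba
  · have hswap : reflectPerm n a b hb =
        swap ⟨a, by omega⟩ ⟨b, hb⟩ * reflectPerm n (a + 1) (b - 1) (by omega) := by
      ext x
      rw [Perm.mul_apply, swap_apply_def]
      split_ifs with h₁ h₂ <;>
        simp only [reflectPerm, Fin.ext_iff, Fin.val_permOfInvolutive, reflect] at * <;>
        split_ifs at * <;> omega
    rw [hswap, map_mul, Perm.sign_swap (Fin.ne_of_val_ne hab.ne), ih _ (by omega),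
      show (b + 1 - a) / 2 = (b - 1 + 1 - (a + 1)) / 2 + 1 by omega, pow_succ']
  · have hid : reflectPerm n a b hb = 1 := by
      ext x
      simp only [reflectPerm, Fin.val_permOfInvolutive, reflect, Perm.coe_one, id]
      split_ifs <;> omega
    rw [hid, map_one, show (b + 1 - a) / 2 = 0 by omega, pow_zero]

def partnerPerm (n m : ℕ) (hm : m ≤ n) : Perm (Fin n) :=
  Fin.permOfInvolutive (partner m) (partner_involutive m) fun x hx => by
    rcases lt_or_ge x m with hxm | hxm
    · exact (partner_lt hxm).trans_le hm
    · rwa [partner_of_le hxm]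

lemma partnerPerm_zero (n : ℕ) : partnerPerm n 0 (Nat.zero_le n) = 1 := by
  ext x
  simp [partnerPerm, partner_zero]

lemma partnerPerm_eq_mul {n m : ℕ} (hm : m ≤ n) (h₀ : m ≠ 0) :
    partnerPerm n m hm = reflectPerm n (mirror m) (m - 1) (by omega) *
      partnerPerm n (mirror m) ((mirror_lt h₀).le.trans hm) := by
  ext x
  simp [partnerPerm, reflectPerm, partner_of_ne_zero h₀]

lemma D_eq_sign_partnerPerm (n : ℕ) : D n = Perm.sign (partnerPerm n n le_rfl) := by
  have huniq : ∀ ⦃x y b : Fin n⦄, x ≤ b → y ≤ b → A (x + b) ≠ 0 → A (y + b) ≠ 0 → x = y :=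
    fun x y b hx hy hxb hyb => Fin.ext (eq_of_A_add_ne_zero hx hy hxb hyb)
  have hpartner : ∀ i : Fin n, A (partnerPerm n n le_rfl i + i) = 1 := fun i => by
    obtain ⟨k, hk⟩ := exists_add_partner i.2
    simp only [partnerPerm, Fin.val_permOfInvolutive]
    exact if_pos ⟨k, by omega⟩
  refine Matrix.det_eq_sign_of_unique_perm _ _ hpartner fun σ hσ =>
    Perm.eq_of_forall_rel (R := fun i j : Fin n => A (i + j) ≠ 0)
      (fun x y h => by rwa [add_comm]) huniq hσ fun i => ?_
  rw [hpartner]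
  exact one_ne_zero

lemma sign_partnerPerm {n m : ℕ} (hm : m ≤ n) : Perm.sign (partnerPerm n m hm) = D m := by
  induction m using Nat.strong_induction_on generalizing n with
  | _ m ih =>
  rw [D_eq_sign_partnerPerm]
  rcases eq_or_ne m 0 with rfl | h₀
  · simp [partnerPerm_zero]
  · rw [partnerPerm_eq_mul hm h₀, partnerPerm_eq_mul le_rfl h₀, map_mul, map_mul, Units.val_mul,
      Units.val_mul, ih _ (mirror_lt h₀), ih _ (mirror_lt h₀), sign_reflectPerm, sign_reflectPerm]

lemma D_eq_neg_one_pow_mul {m ν : ℕ} (h₁ : 2 ^ ν ≤ m) (h₂ : m < 2 ^ (ν + 1)) :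
    D m = (-1) ^ (m - 2 ^ ν) * D (2 ^ (ν + 1) - 1 - m) := by
  have h₀ : m ≠ 0 := by have := Nat.one_le_two_pow (n := ν); omega
  rw [← sign_partnerPerm le_rfl, partnerPerm_eq_mul le_rfl h₀, map_mul, Units.val_mul,
    sign_partnerPerm, sign_reflectPerm, mirror_eq h₁ h₂]
  push_cast
  congr 2
  rw [pow_succ] at h₂
  omega

/-- A signed regular paperfolding sequence: `foldSign (2 ^ j * (2 * b + 1))` is `(-1) ^ b` for
`j = 0` and `-(-1) ^ b` for `j ≥ 1`. -/
def foldSign (h : ℕ) : ℤ :=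
  if h₀ : h = 0 then 1 else (-1) ^ (h / 2) * if h % 2 = 1 then 1 else foldSign (h / 2)
termination_by h
decreasing_by omega

lemma foldSign_two_mul_add_one (b : ℕ) : foldSign (2 * b + 1) = (-1) ^ b := by
  rw [foldSign, dif_neg (by omega), if_pos (by omega), mul_one]
  congr 1
  omega

lemma foldSign_two_mul {h : ℕ} (h₀ : h ≠ 0) : foldSign (2 * h) = (-1) ^ h * foldSign h := by
  rw [foldSign, dif_neg (by omega), if_neg (by omega), Nat.mul_div_cancel_left _ two_pos]

lemma foldSign_two_pow_mul_odd (j b : ℕ) : foldSign (2 ^ (j + 1) * (2 * b + 1)) = -(-1) ^ b := by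
  induction j with
  | zero =>
    rw [zero_add, pow_one, foldSign_two_mul (by omega), foldSign_two_mul_add_one,
      Odd.neg_one_pow ⟨b, rfl⟩, neg_one_mul]
  | succ j ih =>
    rw [show 2 ^ (j + 1 + 1) * (2 * b + 1) = 2 * (2 ^ (j + 1) * (2 * b + 1)) by ring,
      foldSign_two_mul (by positivity), ih,
      Even.neg_one_pow ⟨2 ^ j * (2 * b + 1), by ring⟩, one_mul]

lemma foldSign_two_pow_sub {ν h : ℕ} (h₀ : h ≠ 0) (hlt : h < 2 ^ (ν + 1)) (hne : h ≠ 2 ^ ν) :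
    foldSign (2 ^ (ν + 1) - h) = -foldSign h := by
  induction ν generalizing h with
  | zero => simp only [zero_add, pow_one, pow_zero] at hlt hne; omega
  | succ ν ih =>
  have hpow : 2 ^ (ν + 1 + 1) = 2 * 2 ^ (ν + 1) := pow_succ' 2 (ν + 1)
  obtain ⟨c, rfl | rfl⟩ := Nat.even_or_odd' h
  · have hc : c ≠ 0 := by omega
    rw [show 2 ^ (ν + 1 + 1) - 2 * c = 2 * (2 ^ (ν + 1) - c) by omega, foldSign_two_mul (by omega),
      foldSign_two_mul hc, ih hc (by omega) (by rw [pow_succ] at hne; omega),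
      neg_one_pow_congr (m := 2 ^ (ν + 1) - c) (n := c) (by simp only [Nat.even_iff]; omega)]
    ring
  · rw [show 2 ^ (ν + 1 + 1) - (2 * c + 1) = 2 * (2 ^ (ν + 1) - c - 1) + 1 by omega,
      foldSign_two_mul_add_one, foldSign_two_mul_add_one,
      neg_one_pow_congr (n := c + 1) (by simp only [Nat.even_iff]; omega), pow_succ, mul_neg_one]

lemma D_zero : D 0 = 1 :=
  Matrix.det_fin_zero

lemma D_one : D 1 = 1 := by
  rw [D_eq_neg_one_pow_mul (m := 1) (ν := 0) le_rfl one_lt_two]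
  exact D_zero

lemma foldSign_two_pow (ν : ℕ) : foldSign (2 ^ (ν + 1)) = -1 := by
  simpa using foldSign_two_pow_mul_odd ν 0

lemma D_two_pow_sub_two (ν : ℕ) : D (2 ^ (ν + 2) - 2) = 1 := by
  have hpow : 2 ^ (ν + 2) = 4 * 2 ^ ν := by ring
  have hpos := Nat.one_le_two_pow (n := ν)
  rw [D_eq_neg_one_pow_mul (ν := ν + 1) (by rw [pow_succ]; omega) (by omega),
    show 2 ^ (ν + 1 + 1) - 1 - (2 ^ (ν + 2) - 2) = 1 by omega, D_one, mul_one]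
  exact Even.neg_one_pow (Nat.even_iff.2 (by rw [pow_succ]; omega))

lemma D_two_pow_sub_one (ν : ℕ) : D (2 ^ (ν + 2) - 1) = -1 := by
  have hpow : 2 ^ (ν + 2) = 4 * 2 ^ ν := by ring
  have hpos := Nat.one_le_two_pow (n := ν)
  rw [D_eq_neg_one_pow_mul (ν := ν + 1) (by rw [pow_succ]; omega) (by omega),
    show 2 ^ (ν + 1 + 1) - 1 - (2 ^ (ν + 2) - 1) = 0 by omega, D_zero, mul_one]
  exact Odd.neg_one_pow (Nat.odd_iff.2 (by rw [pow_succ]; omega))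

lemma D_two_pow_sub_two_mul (ν : ℕ) :
    D (2 ^ (ν + 1) - 2) * D (2 ^ (ν + 1) - 1) = foldSign (2 ^ ν) := by
  rcases ν with _ | ν
  · simpa [D_zero, D_one] using (foldSign_two_mul_add_one 0).symm
  · rw [D_two_pow_sub_two, D_two_pow_sub_one, foldSign_two_pow, one_mul]

lemma T_eq_T_two_pow_sub {m ν : ℕ} (h₁ : 2 ^ ν ≤ m) (h₂ : m + 2 < 2 ^ (ν + 1)) :
    T m = T (2 ^ (ν + 1) - 3 - m) := by
  unfold T
  rw [D_eq_neg_one_pow_mul h₁ (by omega), D_eq_neg_one_pow_mul (m := m + 2) (by omega) h₂,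
    show 2 ^ (ν + 1) - 1 - (m + 2) = 2 ^ (ν + 1) - 3 - m by omega,
    show 2 ^ (ν + 1) - 3 - m + 2 = 2 ^ (ν + 1) - 1 - m by omega,
    show m + 2 - 2 ^ ν = m - 2 ^ ν + 2 by omega]
  have hsq : ((-1 : ℤ) ^ (m - 2 ^ ν)) ^ 2 = 1 := by rw [← pow_mul, pow_mul', neg_one_sq, one_pow]
  linear_combination (D (2 ^ (ν + 1) - 1 - m) * D (2 ^ (ν + 1) - 3 - m)) * hsq

lemma T_two_pow_sub_two (ν : ℕ) : T (2 ^ (ν + 1) - 2) = foldSign (2 ^ ν) := by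
  have hpow : 2 ^ (ν + 1 + 1) = 2 * 2 ^ (ν + 1) := pow_succ' 2 (ν + 1)
  have hpos := Nat.one_le_two_pow (n := ν + 1)
  rw [T, show 2 ^ (ν + 1) - 2 + 2 = 2 ^ (ν + 1) by omega,
    D_eq_neg_one_pow_mul (m := 2 ^ (ν + 1)) (ν := ν + 1) le_rfl (by omega),
    show 2 ^ (ν + 1 + 1) - 1 - 2 ^ (ν + 1) = 2 ^ (ν + 1) - 1 by omega, Nat.sub_self, pow_zero,
    one_mul, D_two_pow_sub_two_mul]

lemma T_two_pow_sub_one (ν : ℕ) : T (2 ^ (ν + 1) - 1) = -foldSign (2 ^ ν) := by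
  have hpow : 2 ^ (ν + 1 + 1) = 2 * 2 ^ (ν + 1) := pow_succ' 2 (ν + 1)
  have hpos := Nat.one_le_two_pow (n := ν + 1)
  rw [T, show 2 ^ (ν + 1) - 1 + 2 = 2 ^ (ν + 1) + 1 by omega,
    D_eq_neg_one_pow_mul (m := 2 ^ (ν + 1) + 1) (ν := ν + 1) (by omega) (by omega),
    show 2 ^ (ν + 1 + 1) - 1 - (2 ^ (ν + 1) + 1) = 2 ^ (ν + 1) - 2 by omega,
    show 2 ^ (ν + 1) + 1 - 2 ^ (ν + 1) = 1 by omega, ← D_two_pow_sub_two_mul]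
  ring

theorem T_eq_neg_one_pow_mul_foldSign (m : ℕ) : T m = (-1) ^ m * foldSign (m / 2 + 1) := by
  induction m using Nat.strong_induction_on with
  | _ m ih =>
  obtain ⟨ν, hν⟩ : ∃ ν, Nat.log 2 (m + 2) = ν + 1 :=
    Nat.exists_eq_add_one.2 (Nat.log_pos one_lt_two (by omega))
  have h₁ : 2 ^ (ν + 1) ≤ m + 2 := hν ▸ Nat.pow_log_le_self 2 (by omega)
  have h₂ : m + 2 < 2 ^ (ν + 1 + 1) := hν ▸ Nat.lt_pow_succ_log_self one_lt_two (m + 2)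
  have hpow : 2 ^ (ν + 1) = 2 * 2 ^ ν := pow_succ' 2 ν
  rcases lt_or_ge m (2 ^ (ν + 1)) with hlt | hge
  · obtain rfl | rfl : m = 2 ^ (ν + 1) - 2 ∨ m = 2 ^ (ν + 1) - 1 := by omega
    · rw [T_two_pow_sub_two, show (2 ^ (ν + 1) - 2) / 2 + 1 = 2 ^ ν by omega,
        Even.neg_one_pow (Nat.even_iff.2 (by omega)), one_mul]
    · rw [T_two_pow_sub_one, show (2 ^ (ν + 1) - 1) / 2 + 1 = 2 ^ ν by omega,
        Odd.neg_one_pow (Nat.odd_iff.2 (by omega)), neg_one_mul]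
  · rw [T_eq_T_two_pow_sub hge h₂, ih _ (by omega),
      show (2 ^ (ν + 1 + 1) - 3 - m) / 2 + 1 = 2 ^ (ν + 1) - (m / 2 + 1) by omega,
      foldSign_two_pow_sub (by omega) (by omega) (by omega),
      neg_one_pow_congr (n := m + 1) (by simp only [Nat.even_iff]; omega), pow_succ]
    ring

theorem stmt10 :
    (∀ n : ℕ, T (4 * n) = (-1 : ℤ) ^ n) ∧
    (∀ k n : ℕ, 2 ≤ k → T (2 ^ (k + 1) * n + 2 ^ k - 2) = (-1 : ℤ) ^ (n + 1)) := by
  refine ⟨fun n => ?_, fun k n hk => ?_⟩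
  · rw [T_eq_neg_one_pow_mul_foldSign, show 4 * n / 2 + 1 = 2 * n + 1 by omega,
      foldSign_two_mul_add_one, Even.neg_one_pow ⟨2 * n, by ring⟩, one_mul]
  · obtain ⟨j, rfl⟩ : ∃ j, k = j + 2 := ⟨k - 2, by omega⟩
    have hsplit : 2 ^ (j + 2 + 1) * n + 2 ^ (j + 2) = 2 * (2 ^ (j + 1) * (2 * n + 1)) := by ring
    have hpos : 1 ≤ 2 ^ (j + 1) * (2 * n + 1) := Nat.one_le_iff_ne_zero.2 (by positivity)
    rw [T_eq_neg_one_pow_mul_foldSign,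
      show (2 ^ (j + 2 + 1) * n + 2 ^ (j + 2) - 2) / 2 + 1 = 2 ^ (j + 1) * (2 * n + 1) by omega,
      foldSign_two_pow_mul_odd, Even.neg_one_pow (Nat.even_iff.2 (by omega)), pow_succ]
    ring
end

section
/- Let d(n) = det(a_{i+j})_{i,j=0}^{n-1}, α(n) = 2^{⌈log₂ n⌉} - 1 and β(n) = 2n - 1 - α(n). Then for n ≥ 1, d(n) = (-1)^(β(n) choose 2) · x_{α(n)}^{β(n)} · d(n - β(n)). -/
/-!
Put `q = 2 ^ e < n ≤ 2 q` and `n = m + 2 h` with `m + h = q`. No power of two lies strictly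
between `q` and `2 q` or between `2 q` and `4 q`, so among the entries `a (i + j)` of the Hankel
matrix with `i + j ≥ q` only those on the antidiagonal `i + j = 2 q - 1` can be nonzero.
Reversing the order of the last `2 h` columns, which costs the sign `(-1) ^ (2 h).choose 2`,
makes the matrix block triangular: the last `h` rows meet only the last `h` columns, where they
form an upper triangular block with `x (2 q - 1)` on the diagonal, and the rest splits in the same
way into the Hankel matrix of size `m` and a second such block.
-/

open Equiv Matrix

theorem Fin.sign_revPerm (k : ℕ) :
    Perm.sign (Fin.revPerm : Perm (Fin k)) = (-1) ^ k.choose 2 := by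
  induction k with
  | zero => rfl
  | succ k ih =>
    have hrev : (Fin.revPerm : Perm (Fin (k + 1))) =
        Perm.decomposeFin.symm (0, Fin.revPerm) * finRotate (k + 1) := by
      ext i
      induction i using Fin.lastCases <;> simp [Fin.rev_castSucc]
    rw [hrev, map_mul, Perm.decomposeFin.symm_sign, ih, sign_finRotate, Nat.choose_succ_succ',
      Nat.choose_one_right, pow_add]
    simp [mul_comm]

namespace Fin

def revFrom (m n : ℕ) : Perm (Fin n) :=
  Function.Involutive.toPerm
    (fun j => if h : (j : ℕ) < m then j else ⟨m + n - 1 - j, by omega⟩)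
    (by
      intro j
      by_cases h : (j : ℕ) < m
      · simp [h]
      · have h' : ¬ m + n - 1 - (j : ℕ) < m := by omega
        ext
        simp [h, h']
        omega)

theorem val_revFrom_of_lt {m n : ℕ} {j : Fin n} (hj : (j : ℕ) < m) :
    (revFrom m n j : ℕ) = j := by
  change ((if h : (j : ℕ) < m then j else ⟨m + n - 1 - j, _⟩ : Fin n) : ℕ) = _
  rw [dif_pos hj]

theorem val_revFrom_of_le {m n : ℕ} {j : Fin n} (hj : m ≤ (j : ℕ)) :
    (revFrom m n j : ℕ) = m + n - 1 - j := by
  change ((if h : (j : ℕ) < m then j else ⟨m + n - 1 - j, _⟩ : Fin n) : ℕ) = _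
  rw [dif_neg (by omega)]

theorem sign_revFrom {m n : ℕ} (hmn : m ≤ n) :
    Perm.sign (revFrom m n) = (-1) ^ (n - m).choose 2 := by
  rw [← sign_revPerm, ← one_mul (Perm.sign revPerm), ← Perm.sign_refl (α := Fin m),
    ← Perm.sign_sumCongr]
  refine (Perm.sign_eq_sign_of_equiv _ _ (finSumFinEquiv.trans (finCongr (by omega))) ?_).symm
  rintro (i | i) <;> ext
  · simp [val_revFrom_of_lt]
  · simp [val_revFrom_of_le]
    omega

end Fin

theorem Nat.ne_two_pow_of_lt_of_lt {e k : ℕ} (h₁ : 2 ^ e < k) (h₂ : k < 2 ^ (e + 2))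
    (h₃ : k ≠ 2 ^ (e + 1)) (j : ℕ) : k ≠ 2 ^ j := by
  rintro rfl
  rw [Nat.pow_lt_pow_iff_right (by norm_num)] at h₁ h₂
  exact h₃ (by congr 1; omega)

namespace Matrix

variable {R : Type*} [CommRing R]

theorem det_finAdd_of_block₂₁_eq_zero {k l : ℕ} (M : Matrix (Fin (k + l)) (Fin (k + l)) R)
    (h : ∀ i j, M (Fin.natAdd k i) (Fin.castAdd l j) = 0) :
    M.det = (M.submatrix (Fin.castAdd l) (Fin.castAdd l)).det *
      (M.submatrix (Fin.natAdd k) (Fin.natAdd k)).det := by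
  rw [← det_submatrix_equiv_self finSumFinEquiv,
    ← det_fromBlocks_zero₂₁ _ (M.submatrix (Fin.castAdd l) (Fin.natAdd k))]
  congr 1
  ext (i | i) (j | j) <;> simp [h]

theorem det_finAdd_of_block₁₂_eq_zero {k l : ℕ} (M : Matrix (Fin (k + l)) (Fin (k + l)) R)
    (h : ∀ i j, M (Fin.castAdd l i) (Fin.natAdd k j) = 0) :
    M.det = (M.submatrix (Fin.castAdd l) (Fin.castAdd l)).det *
      (M.submatrix (Fin.natAdd k) (Fin.natAdd k)).det := by
  rw [← det_submatrix_equiv_self finSumFinEquiv,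
    ← det_fromBlocks_zero₁₂ _ (M.submatrix (Fin.natAdd k) (Fin.castAdd l))]
  congr 1
  ext (i | i) (j | j) <;> simp [h]

theorem det_eq_pow_of_isUpperTriangular {n : ℕ} (M : Matrix (Fin n) (Fin n) R) (c : R)
    (hM : M.IsUpperTriangular) (hdiag : ∀ i, M i i = c) : M.det = c ^ n := by
  simp [det_of_isUpperTriangular hM, hdiag]

end Matrix

section Hankel

variable {R : Type*} [CommRing R]

def hankel (a : ℕ → R) (n : ℕ) : Matrix (Fin n) (Fin n) R := Matrix.of fun i j => a (i + j)

theorem det_hankel_add_add (a : ℕ → R) {m h : ℕ}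
    (hvan : ∀ k, m + h ≤ k → k + 1 < 2 * (m + h + h) → k ≠ 2 * (m + h) - 1 → a k = 0) :
    (hankel a (m + h + h)).det =
      (-1) ^ (h + h).choose 2 * a (2 * (m + h) - 1) ^ (h + h) * (hankel a m).det := by
  set c := a (2 * (m + h) - 1)
  set N := (hankel a (m + h + h)).submatrix id (Fin.revFrom m (m + h + h))
  -- `N` is block triangular with diagonal blocks `hankel a m`, `U`, `U`
  set U : Matrix (Fin h) (Fin h) R := of fun i j => a (2 * (m + h) - 1 + i - j)
  have hU : U.det = c ^ h := by
    refine det_eq_pow_of_isUpperTriangular _ _ (fun i j (hij : (j : ℕ) < i) => ?_) fun i => ?_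
    · exact hvan _ (by omega) (by omega) (by omega)
    · simp [U, c]
  have hN : N.det = (hankel a m).det * c ^ h * c ^ h := by
    rw [det_finAdd_of_block₂₁_eq_zero N ?_, det_finAdd_of_block₁₂_eq_zero _ ?_, ← hU]
    · congr 3 <;> ext i j <;>
        simp only [N, U, hankel, submatrix_apply, of_apply, id, Fin.val_castAdd, Fin.val_natAdd]
      · simp [Fin.val_revFrom_of_lt]
      all_goals
        rw [Fin.val_revFrom_of_le (by simp only [Fin.val_castAdd, Fin.val_natAdd]; omega)]
        simp only [Fin.val_castAdd, Fin.val_natAdd]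
        congr 1
        omega
    · intro i j
      simp [N, hankel, Fin.val_revFrom_of_le]
      apply hvan <;> omega
    · intro i j
      by_cases hj : (j : ℕ) < m
      · simp [N, hankel, Fin.val_revFrom_of_lt, hj]
        apply hvan <;> omega
      · simp [N, hankel, Fin.val_revFrom_of_le, le_of_not_gt hj]
        apply hvan <;> omega
  have hsign : Perm.sign (Fin.revFrom m (m + h + h)) = (-1) ^ (h + h).choose 2 := by
    rw [Fin.sign_revFrom (by omega)]
    congr 2
    omega
  rw [det_permute', hsign] at hN
  push_cast at hN
  calc (hankel a (m + h + h)).det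
      = ((-1) ^ (h + h).choose 2) ^ 2 * (hankel a (m + h + h)).det := by
        rw [← pow_mul, pow_mul', neg_one_sq, one_pow, one_mul]
    _ = (-1) ^ (h + h).choose 2 * c ^ (h + h) * (hankel a m).det := by
        rw [sq, mul_assoc, hN]
        ring

end Hankel

open Classical in
theorem stmt15 {R : Type*} [CommRing R] (x : ℕ → R)
    (a : ℕ → R) (ha : ∀ n, a n = if ∃ k : ℕ, n + 1 = 2 ^ k then x n else 0)
    (d : ℕ → R) (hd : ∀ n, d n = Matrix.det (Matrix.of fun i j : Fin n => a ((i : ℕ) + j)))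
    (α β : ℕ → ℕ) (hα : ∀ n, α n = 2 ^ (Nat.clog 2 n) - 1)
    (hβ : ∀ n, β n = 2 * n - 1 - α n)
    (n : ℕ) (hn : 1 ≤ n) :
    d n = (-1 : R) ^ ((β n).choose 2) * x (α n) ^ (β n) * d (n - β n) := by
  obtain rfl | hn2 : n = 1 ∨ 2 ≤ n := by omega
  · have hβ1 : β 1 = 1 := by simp [hβ, hα]
    have hx0 : a 0 = x 0 := by rw [ha, if_pos ⟨0, rfl⟩]
    simp [hd, hα, hβ1, hx0]
  obtain ⟨e, hce⟩ : ∃ e, Nat.clog 2 n = e + 1 :=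
    ⟨_, (Nat.succ_pred_eq_of_pos (Nat.clog_pos (by norm_num) hn2)).symm⟩
  have hlo : 2 ^ e < n := by
    simpa [hce] using Nat.pow_pred_clog_lt_self (b := 2) (by norm_num) hn2
  have hhi : n ≤ 2 * 2 ^ e := by
    simpa [hce, pow_succ'] using Nat.le_pow_clog (b := 2) (by norm_num) n
  obtain ⟨m, h, hmh, hq⟩ : ∃ m h, n = m + h + h ∧ m + h = 2 ^ e :=
    ⟨2 * 2 ^ e - n, n - 2 ^ e, by omega, by omega⟩
  have hαn : α n = 2 * (m + h) - 1 := by rw [hα, hce, hq, pow_succ']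
  have hβn : β n = h + h := by rw [hβ, hαn]; omega
  have hxa : x (2 * (m + h) - 1) = a (2 * (m + h) - 1) := by
    rw [ha, if_pos ⟨e + 1, by rw [hq, pow_succ]; omega⟩]
  rw [hβn, hαn, hxa, hd, hd, show n - (h + h) = m by omega, hmh]
  refine det_hankel_add_add a fun k hk hk₂ hk₃ => ?_
  rw [ha, if_neg]
  rintro ⟨j, hj⟩
  exact Nat.ne_two_pow_of_lt_of_lt (e := e) (by omega) (by rw [pow_succ, pow_succ]; omega)
    (by rw [pow_succ]; omega) j hj
end
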